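/- arXiv:0707.1069 — 4 statements merged into one kernel-verified Lean document; each statement's English description precedes it below -/
import Mathlib

section
/- Let r and t be integers and G a finite simple graph with χ_r(G) − M_r(G) > (ω(G) + Δ(G) + 1)/2 + t, and let C = {I_1, …, I_m} be an optimal r-bounded coloring of G. If I_j = {v} is a singleton color class of C, then |L_C(v)| ≥ ω(G) + 2t. -/
open Finset

variable {V : Type*} [Fintype V] [DecidableEq V]

/-- A (proper) coloring of `G`: a partition of the vertex set into nonempty independent sets. -/
def IsColoring (G : SimpleGraph V) (C : Finset (Finset V)) : Prop :=
  (∀ I ∈ C, I.Nonempty) ∧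
  (∀ v : V, ∃! I, I ∈ C ∧ v ∈ I) ∧
  (∀ I ∈ C, ∀ v ∈ I, ∀ w ∈ I, ¬ G.Adj v w)

/-- The frame of a coloring: the multiset of the orders of its color classes. -/
def Frame (C : Finset (Finset V)) : Multiset ℕ :=
  C.val.map Finset.card

/-- The directed edge `(v, w)` is `C`-lonely: `w` lies in a color class `I` not containing `v`
and `N(v) ∩ I = {w}`. -/
def Lonely (G : SimpleGraph V) (C : Finset (Finset V)) (v w : V) : Prop :=
  ∃ I ∈ C, v ∉ I ∧ w ∈ I ∧ ∀ x ∈ I, (G.Adj v x ↔ x = w)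

/-- The chromatic number: the minimum number of color classes in a proper coloring. -/
noncomputable def chi (G : SimpleGraph V) : ℕ :=
  sInf {n | ∃ C : Finset (Finset V), IsColoring G C ∧ C.card = n}

/-- An optimal coloring: a proper coloring with `χ(G)` color classes. -/
def IsOptimalColoring (G : SimpleGraph V) (C : Finset (Finset V)) : Prop :=
  IsColoring G C ∧ C.card = chi G

/-- A (directed) path in the `C`-lonely graph `L_C(G)`, as a nonempty duplicate-free list of
vertices whose consecutive pairs are `C`-lonely edges. -/
def IsLonelyPath (G : SimpleGraph V) (C : Finset (Finset V)) (p : List V) : Prop :=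
  p ≠ [] ∧ p.Nodup ∧ List.Chain' (Lonely G C) p

/-- The stinginess `ι(G)`: the maximum number of singleton color classes appearing in an
optimal coloring of `G`. -/
noncomputable def stinginess (G : SimpleGraph V) : ℕ :=
  sSup {n | ∃ C : Finset (Finset V), IsOptimalColoring G C ∧
    (C.filter fun I => I.card = 1).card = n}

/-- The independence number `α(G)`. -/
noncomputable def indepNum (G : SimpleGraph V) : ℕ :=
  sSup {n | ∃ s : Finset V, (∀ v ∈ s, ∀ w ∈ s, ¬ G.Adj v w) ∧ s.card = n}

/-- An `r`-bounded coloring has all color classes of order at most `r`. -/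
def RBounded (r : ℕ) (C : Finset (Finset V)) : Prop :=
  ∀ I ∈ C, I.card ≤ r

/-- `χ_r(G)`: the minimum number of color classes in an `r`-bounded coloring of `G`. -/
noncomputable def chiR (G : SimpleGraph V) (r : ℕ) : ℕ :=
  sInf {n | ∃ C : Finset (Finset V), IsColoring G C ∧ RBounded r C ∧ C.card = n}

/-- An optimal `r`-bounded coloring. -/
def IsOptimalRBounded (G : SimpleGraph V) (r : ℕ) (C : Finset (Finset V)) : Prop :=
  IsColoring G C ∧ RBounded r C ∧ C.card = chiR G r

/-- `M_r(G)`: the maximum number of order-`r` color classes in an optimal `r`-bounded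
coloring of `G`. -/
noncomputable def Mr (G : SimpleGraph V) (r : ℕ) : ℕ :=
  sSup {n | ∃ C : Finset (Finset V), IsOptimalRBounded G r C ∧
    (C.filter fun I => I.card = r).card = n}

/-- The `r`-bounded stinginess `ι_r(G)`: the maximum number of singleton color classes in an
optimal `r`-bounded coloring of `G`. -/
noncomputable def stinginessR (G : SimpleGraph V) (r : ℕ) : ℕ :=
  sSup {n | ∃ C : Finset (Finset V), IsOptimalRBounded G r C ∧
    (C.filter fun I => I.card = 1).card = n}

/-- `P` is a frame property: membership in `P` only depends on the frame. -/
def IsFrameProperty (G : SimpleGraph V) (P : Finset (Finset V) → Prop) : Prop :=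
  ∀ C C' : Finset (Finset V), IsColoring G C → IsColoring G C' →
    Frame C = Frame C' → P C → P C'

/-- `P` is singleton-friendly: `P` is preserved by merging two singleton color classes. -/
def IsSingletonFriendly (G : SimpleGraph V) (P : Finset (Finset V) → Prop) : Prop :=
  ∀ C : Finset (Finset V), IsColoring G C → ∀ a b : V, a ≠ b → ¬ G.Adj a b →
    ({a} : Finset V) ∈ C → ({b} : Finset V) ∈ C → P C →
      P (insert ({a, b} : Finset V) ((C.erase {a}).erase {b}))

/-- A `P`-optimal coloring: a coloring satisfying `P` with the minimum number of color classes
among colorings satisfying `P`. -/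
def IsPOptimal (G : SimpleGraph V) (P : Finset (Finset V) → Prop)
    (C : Finset (Finset V)) : Prop :=
  IsColoring G C ∧ P C ∧
    ∀ C' : Finset (Finset V), IsColoring G C' → P C' → C.card ≤ C'.card

/-- `Frame_m(C)`: the entries of the frame of `C` that are at least `m`. -/
def FrameGe (m : ℕ) (C : Finset (Finset V)) : Multiset ℕ :=
  (Frame C).filter (fun k => m ≤ k)

/-- The matching number `ν(G)`: the maximum number of edges in a matching of `G`. -/
noncomputable def matchingNumber (G : SimpleGraph V) : ℕ :=
  sSup {n | ∃ M : G.Subgraph, M.IsMatching ∧ M.edgeSet.ncard = n}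

/- The classes of `C` other than `{v}` are sorted by the number of neighbours of `v` they contain.
A class without neighbours of `v` is full, otherwise `v` could join it and the optimal coloring
would lose a class; so there are at most `M_r(G)` of them. The classes with at least two neighbours
use up at least two of the at most `Δ(G)` edges at `v` each. Hence
`2 (χ_r(G) - 1) ≤ a + Δ(G) + 2 M_r(G)`, where `a` counts the classes with exactly one neighbour
`w` of `v`; each of these gives a distinct lonely edge `(v, w)`. -/

theorem Finset.two_mul_card_le_card_filter_eq_one_add_sum_add {ι : Type*} (s : Finset ι)
    (n : ι → ℕ) :
    2 * #s ≤ #{i ∈ s | n i = 1} + ∑ i ∈ s, n i + 2 * #{i ∈ s | n i = 0} := by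
  rw [card_filter, card_filter, card_eq_sum_ones, mul_sum, mul_sum, ← sum_add_distrib,
    ← sum_add_distrib]
  exact sum_le_sum fun i _ => by split_ifs <;> omega

namespace IsColoring

variable {G : SimpleGraph V} {C : Finset (Finset V)}

omit [Fintype V] [DecidableEq V] in
theorem eq_of_mem_of_mem (hC : IsColoring G C) {I J : Finset V} (hI : I ∈ C) (hJ : J ∈ C)
    {x : V} (hxI : x ∈ I) (hxJ : x ∈ J) : I = J :=
  (hC.2.1 x).unique ⟨hI, hxI⟩ ⟨hJ, hxJ⟩

omit [Fintype V] [DecidableEq V] in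
theorem pairwiseDisjoint (hC : IsColoring G C) : (C : Set (Finset V)).PairwiseDisjoint id :=
  fun _ hI _ hJ hIJ => disjoint_left.2 fun _ hxI hxJ => hIJ (hC.eq_of_mem_of_mem hI hJ hxI hxJ)

omit [Fintype V] in
theorem card_biUnion_filter (hC : IsColoring G C) {D : Finset (Finset V)} (hD : D ⊆ C)
    (p : V → Prop) [DecidablePred p] :
    #(D.biUnion fun I => {x ∈ I | p x}) = ∑ I ∈ D, #{x ∈ I | p x} :=
  card_biUnion <| (hC.pairwiseDisjoint.subset (by exact_mod_cast hD)).mono fun _ =>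
    filter_subset _ _

omit [Fintype V] in
theorem insert_union_erase_erase (hC : IsColoring G C) {I J : Finset V} (hI : I ∈ C)
    (hJ : J ∈ C) (hIJ : ∀ x ∈ I, ∀ y ∈ J, ¬ G.Adj x y) :
    IsColoring G (insert (I ∪ J) ((C.erase I).erase J)) := by
  obtain ⟨hne, huniq, hind⟩ := hC
  have hmem : ∀ {K}, K ∈ (C.erase I).erase J ↔ K ≠ J ∧ K ≠ I ∧ K ∈ C := by
    simp only [mem_erase, implies_true]
  refine ⟨fun K hK => ?_, fun w => ?_, fun K hK => ?_⟩
  · rcases mem_insert.1 hK with rfl | hK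
    · exact (hne I hI).mono subset_union_left
    · exact hne K (hmem.1 hK).2.2
  · obtain ⟨K, ⟨hKC, hwK⟩, hKuniq⟩ := huniq w
    have hcls : ∀ L ∈ C, w ∈ L → L = K := fun L hL hwL => hKuniq L ⟨hL, hwL⟩
    by_cases hK : K = I ∨ K = J
    · refine ⟨I ∪ J, ⟨mem_insert_self _ _, ?_⟩, fun L ⟨hL, hwL⟩ => ?_⟩
      · rcases hK with rfl | rfl
        exacts [mem_union_left _ hwK, mem_union_right _ hwK]
      rcases mem_insert.1 hL with rfl | hL
      · rfl
      obtain ⟨hLJ, hLI, hLC⟩ := hmem.1 hL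
      rcases hK with rfl | rfl
      exacts [(hLI (hcls L hLC hwL)).elim, (hLJ (hcls L hLC hwL)).elim]
    push Not at hK
    refine ⟨K, ⟨mem_insert_of_mem (hmem.2 ⟨hK.2, hK.1, hKC⟩), hwK⟩, fun L ⟨hL, hwL⟩ => ?_⟩
    rcases mem_insert.1 hL with rfl | hL
    · rcases mem_union.1 hwL with hwI | hwJ
      exacts [(hK.1 (hcls I hI hwI).symm).elim, (hK.2 (hcls J hJ hwJ).symm).elim]
    · exact hcls L (hmem.1 hL).2.2 hwL
  · rcases mem_insert.1 hK with rfl | hK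
    · intro x hx y hy hxy
      rcases mem_union.1 hx with hx | hx <;> rcases mem_union.1 hy with hy | hy
      exacts [hind I hI x hx y hy hxy, hIJ x hx y hy hxy, hIJ y hy x hx hxy.symm,
        hind J hJ x hx y hy hxy]
    · exact hind K (hmem.1 hK).2.2

variable [DecidableRel G.Adj]

theorem sum_card_filter_adj_le_degree (hC : IsColoring G C)
    {D : Finset (Finset V)} (hD : D ⊆ C) (v : V) :
    ∑ I ∈ D, #{x ∈ I | G.Adj v x} ≤ G.degree v := by
  rw [← hC.card_biUnion_filter hD, ← G.card_neighborFinset_eq_degree]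
  refine card_le_card fun x hx => ?_
  obtain ⟨I, -, hxI⟩ := mem_biUnion.1 hx
  exact (G.mem_neighborFinset v x).2 (mem_filter.1 hxI).2

omit [Fintype V] [DecidableEq V] in
theorem lonely_of_filter_adj_eq_singleton (hC : IsColoring G C) {I : Finset V} (hI : I ∈ C)
    {v w : V} (h : {x ∈ I | G.Adj v x} = {w}) : Lonely G C v w := by
  have hw : w ∈ {x ∈ I | G.Adj v x} := h ▸ mem_singleton_self w
  rw [mem_filter] at hw
  refine ⟨I, hI, fun hvI => hC.2.2 I hI v hvI w hw.1 hw.2, hw.1, fun x hx => ?_⟩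
  rw [← mem_singleton, ← h, mem_filter]
  exact (and_iff_right hx).symm

theorem card_filter_card_adj_eq_one_le_ncard_lonely (hC : IsColoring G C)
    {D : Finset (Finset V)} (hD : D ⊆ C) (v : V) :
    #{I ∈ D | #{x ∈ I | G.Adj v x} = 1} ≤ {w | Lonely G C v w}.ncard := by
  set A := {I ∈ D | #{x ∈ I | G.Adj v x} = 1}
  have hAC : A ⊆ C := (filter_subset _ _).trans hD
  calc #A = ∑ I ∈ A, #{x ∈ I | G.Adj v x} := by
        rw [card_eq_sum_ones]
        exact sum_congr rfl fun I hI => (mem_filter.1 hI).2.symm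
    _ = #(A.biUnion fun I => {x ∈ I | G.Adj v x}) := (hC.card_biUnion_filter hAC _).symm
    _ ≤ {w | Lonely G C v w}.ncard := by
        rw [← Set.ncard_coe_finset]
        refine Set.ncard_le_ncard (fun w hw => ?_) (Set.toFinite _)
        obtain ⟨I, hIA, hwI⟩ := mem_biUnion.1 hw
        obtain ⟨u, hu⟩ := card_eq_one.1 (mem_filter.1 hIA).2
        rw [hu, mem_singleton] at hwI
        exact hC.lonely_of_filter_adj_eq_singleton (hAC hIA) (hwI ▸ hu)

end IsColoring

namespace IsOptimalRBounded

variable {G : SimpleGraph V} {r : ℕ} {C : Finset (Finset V)}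

omit [Fintype V] in
theorem card_eq_of_forall_not_adj (hC : IsOptimalRBounded G r C) {v : V} (hv : {v} ∈ C)
    {I : Finset V} (hI : I ∈ C) (hIv : I ≠ {v}) (hadj : ∀ x ∈ I, ¬ G.Adj v x) : #I = r := by
  obtain ⟨hcol, hbdd, hcard⟩ := hC
  by_contra hIr
  have hvI : v ∉ I := fun hvI => hIv (hcol.eq_of_mem_of_mem hI hv hvI (mem_singleton_self v))
  have hmerged := hcol.insert_union_erase_erase hv hI fun x hx y hy =>
    (mem_singleton.1 hx) ▸ hadj y hy
  have hbdd' : RBounded r (insert ({v} ∪ I) ((C.erase {v}).erase I)) := by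
    intro K hK
    rcases mem_insert.1 hK with rfl | hK
    · rw [← insert_eq, card_insert_of_notMem hvI]
      exact lt_of_le_of_ne (hbdd I hI) hIr
    · exact hbdd K (mem_of_mem_erase (mem_of_mem_erase hK))
  have hle : chiR G r ≤ #(insert ({v} ∪ I) ((C.erase {v}).erase I)) :=
    Nat.sInf_le ⟨_, hmerged, hbdd', rfl⟩
  have := card_insert_le ({v} ∪ I) ((C.erase {v}).erase I)
  have := card_erase_add_one (mem_erase.2 ⟨hIv, hI⟩)
  have := card_erase_add_one hv
  omega

omit [DecidableEq V] in
theorem card_filter_card_eq_le_Mr (hC : IsOptimalRBounded G r C) :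
    #{I ∈ C | #I = r} ≤ Mr G r := by
  refine le_csSup ⟨Fintype.card (Finset V), ?_⟩ ⟨C, hC, rfl⟩
  rintro _ ⟨C', -, rfl⟩
  exact (card_le_card (filter_subset _ _)).trans (card_le_univ C')

end IsOptimalRBounded

theorem statement_16 (G : SimpleGraph V) [DecidableRel G.Adj] (r : ℕ) (t : ℤ)
    (h : ((G.cliqueNum : ℝ) + G.maxDegree + 1) / 2 + t
      < (chiR G r : ℝ) - Mr G r)
    (C : Finset (Finset V)) (hC : IsOptimalRBounded G r C)
    (v : V) (hv : ({v} : Finset V) ∈ C) :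
    (G.cliqueNum : ℤ) + 2 * t ≤ (({u | Lonely G C v u} : Set V).ncard : ℤ) := by
  set D := C.erase {v}
  have hDC : D ⊆ C := erase_subset _ _
  have hfull : #{I ∈ D | #{x ∈ I | G.Adj v x} = 0} ≤ Mr G r := by
    refine le_trans (card_le_card fun I hI => ?_) hC.card_filter_card_eq_le_Mr
    simp only [D, mem_filter, mem_erase, card_eq_zero, filter_eq_empty_iff] at hI ⊢
    exact ⟨hI.1.2, hC.card_eq_of_forall_not_adj hv hI.1.2 hI.1.1 hI.2⟩
  have hdeg := (hC.1.sum_card_filter_adj_le_degree hDC v).trans (G.degree_le_maxDegree v)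
  have hlonely := hC.1.card_filter_card_adj_eq_one_le_ncard_lonely hDC v
  have hcount := two_mul_card_le_card_filter_eq_one_add_sum_add D fun I => #{x ∈ I | G.Adj v x}
  have hD : #D + 1 = chiR G r := by rw [card_erase_add_one hv, hC.2.2]
  have h' : (G.cliqueNum + G.maxDegree + 1 + 2 * t : ℤ) < 2 * chiR G r - 2 * Mr G r := by
    exact_mod_cast (by linarith : ((G.cliqueNum : ℝ) + G.maxDegree + 1 + 2 * t)
      < 2 * chiR G r - 2 * Mr G r)
  omega
end

section
/- Let r ≥ 2. If G is a finite simple graph with ι_r(G) > ω(G)/2, then χ_r(G) − M_r(G) ≤ (ω(G) + Δ(G) + 1)/2. -/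
open Finset

variable {V : Type*} [Fintype V] [DecidableEq V]

/-!
Take an optimal `r`-bounded coloring `C` with `ι_r(G)` singleton classes and let `K` be the set of
their vertices. No recoloring of a few classes can save a class. Hence `K` is a clique, each
`x ∈ K` has a neighbour in every non-full class, and if `x` has a unique neighbour `w` in a class
`J` (a lonely class of `x`), then swapping `x` and `w` shows that `w` is adjacent to all of `K`;
lonely neighbours of distinct pivots in distinct classes are adjacent as well. If every pivot had
more than `ω - |K|` lonely classes, then either many classes are lonely for two pivots, or each
pivot has a lonely class of its own; in both cases `K` and the lonely neighbours in these classes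
form a clique of more than `ω` vertices. So some `x ∈ K` has at most `ω - |K|` lonely classes.
Counting the neighbours of `x` class by class, each non-full class with at least two vertices
contributes at least two, except for the lonely classes of `x`, and this gives
`2 χ_r ≤ ω + Δ + 1 + 2 M_r` when `2 |K| > ω`.
-/

section Coloring

variable {α : Type*} {G : SimpleGraph α} {C : Finset (Finset α)}

theorem isIndepSet_coe_iff {I : Finset α} :
    G.IsIndepSet (I : Set α) ↔ ∀ v ∈ I, ∀ w ∈ I, ¬ G.Adj v w :=
  ⟨fun h _ hv _ hw hvw => h hv hw hvw.ne hvw, fun h _ hv _ hw _ => h _ hv _ hw⟩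

theorem isIndepSet_insert_of_forall_not_adj [DecidableEq α] {I : Finset α} {x : α}
    (hI : G.IsIndepSet (I : Set α)) (hx : ∀ v ∈ I, ¬ G.Adj x v) :
    G.IsIndepSet (insert x I : Finset α) := by
  rw [coe_insert, SimpleGraph.IsIndepSet, Set.pairwise_insert]
  exact ⟨hI, fun v hv _ => ⟨hx v hv, fun h => hx v hv h.symm⟩⟩

theorem isIndepSet_pair_of_not_adj [DecidableEq α] {a b : α} (hab : ¬ G.Adj a b) :
    G.IsIndepSet ({a, b} : Finset α) := by
  rw [coe_pair, SimpleGraph.IsIndepSet, Set.pairwise_pair]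
  exact fun _ => ⟨hab, fun h => hab h.symm⟩

theorem isIndepSet_insert_erase_of_filter_adj_eq [DecidableEq α] [DecidableRel G.Adj]
    {J : Finset α} {x w : α} (hJ : G.IsIndepSet (J : Set α)) (hw : J.filter (G.Adj x) = {w}) :
    G.IsIndepSet (insert x (J.erase w) : Finset α) := by
  refine isIndepSet_insert_of_forall_not_adj (hJ.mono (coe_subset.2 (erase_subset w J)))
    fun v hv hxv => (mem_erase.1 hv).1 ?_
  exact mem_singleton.1 (hw ▸ mem_filter.2 ⟨(mem_erase.1 hv).2, hxv⟩)

theorem card_insert_erase_le [DecidableEq α] {J : Finset α} {x w : α} (hw : w ∈ J) :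
    #(insert x (J.erase w)) ≤ #J :=
  (card_insert_le _ _).trans_eq (card_erase_add_one hw)

namespace IsColoring

theorem eq_of_mem (hC : IsColoring G C) {v : α} {I J : Finset α} (hI : I ∈ C) (hJ : J ∈ C)
    (hvI : v ∈ I) (hvJ : v ∈ J) : I = J :=
  (hC.2.1 v).unique ⟨hI, hvI⟩ ⟨hJ, hvJ⟩

theorem notMem_of_singleton_mem (hC : IsColoring G C) {x : α} {J : Finset α} (hx : {x} ∈ C)
    (hJ : J ∈ C) (hJx : J.Nontrivial) : x ∉ J :=
  fun h => hJx.ne_singleton (hC.eq_of_mem hJ hx h (mem_singleton_self x))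

theorem disjoint_of_ne (hC : IsColoring G C) {I J : Finset α} (hI : I ∈ C) (hJ : J ∈ C)
    (hIJ : I ≠ J) : Disjoint I J :=
  disjoint_left.2 fun _ hvI hvJ => hIJ (hC.eq_of_mem hI hJ hvI hvJ)

theorem isIndepSet (hC : IsColoring G C) {I : Finset α} (hI : I ∈ C) : G.IsIndepSet (I : Set α) :=
  isIndepSet_coe_iff.2 (hC.2.2 I hI)

theorem degree_eq_sum_card_filter_adj [Fintype α] [DecidableEq α] [DecidableRel G.Adj]
    (hC : IsColoring G C) (x : α) : G.degree x = ∑ I ∈ C, #(I.filter (G.Adj x)) := by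
  have hnbr : G.neighborFinset x = C.biUnion (fun I => I.filter (G.Adj x)) := by
    ext y
    obtain ⟨I, ⟨hI, hyI⟩, -⟩ := hC.2.1 y
    simp only [SimpleGraph.mem_neighborFinset, mem_biUnion, mem_filter]
    exact ⟨fun h => ⟨I, hI, hyI, h⟩, fun ⟨_, _, _, h⟩ => h⟩
  rw [← G.card_neighborFinset_eq_degree, hnbr, card_biUnion]
  exact fun I hI J hJ hIJ => disjoint_filter_filter (hC.disjoint_of_ne hI hJ hIJ)

end IsColoring

theorem bddAbove_card_filter_of_isOptimalRBounded {r : ℕ} (p : Finset α → Prop)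
    [DecidablePred p] :
    BddAbove {n | ∃ C : Finset (Finset α), IsOptimalRBounded G r C ∧ #(C.filter p) = n} := by
  refine ⟨chiR G r, ?_⟩
  rintro _ ⟨C, hC, rfl⟩
  exact (card_filter_le _ _).trans hC.2.2.le

theorem IsOptimalRBounded.card_filter_card_eq_le_Mr_s17 {r : ℕ} (hopt : IsOptimalRBounded G r C) :
    #(C.filter fun I => #I = r) ≤ Mr G r :=
  le_csSup (bddAbove_card_filter_of_isOptimalRBounded _) ⟨C, hopt, rfl⟩

end Coloring

variable {G : SimpleGraph V} {r : ℕ} {C : Finset (Finset V)}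

theorem exists_coloring_of_cover (F : Finset (Finset V))
    (hind : ∀ e ∈ F, G.IsIndepSet (e : Set V)) (hsize : ∀ e ∈ F, #e ≤ r)
    (hcov : ∀ v, ∃ e ∈ F, v ∈ e) :
    ∃ C, IsColoring G C ∧ RBounded r C ∧ #C ≤ #F := by
  choose f hfF hvf using hcov
  let fiber : Finset V → Finset V := fun e => univ.filter (f · = e)
  have hfiber : ∀ v, fiber (f v) ⊆ f v := fun v u hu => (mem_filter.1 hu).2 ▸ hvf u
  refine ⟨(univ.image f).image fiber, ⟨?_, fun v => ⟨fiber (f v), ?_, ?_⟩, ?_⟩, ?_,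
    card_image_le.trans (card_le_card (image_subset_iff.2 fun v _ => hfF v))⟩
  all_goals simp only [RBounded, mem_image, mem_univ, true_and, forall_exists_index,
    and_imp, forall_apply_eq_imp_iff]
  · exact fun v => ⟨v, by simp [fiber]⟩
  · exact ⟨⟨f v, ⟨v, rfl⟩, rfl⟩, by simp [fiber]⟩
  · intro u hv
    rw [(mem_filter.1 hv).2]
  · exact fun u => isIndepSet_coe_iff.1 ((hind _ (hfF u)).mono (by exact_mod_cast hfiber u))
  · exact fun u => (card_le_card (hfiber u)).trans (hsize _ (hfF u))

theorem chiR_le_card_of_cover (F : Finset (Finset V))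
    (hind : ∀ e ∈ F, G.IsIndepSet (e : Set V)) (hsize : ∀ e ∈ F, #e ≤ r)
    (hcov : ∀ v, ∃ e ∈ F, v ∈ e) : chiR G r ≤ #F := by
  obtain ⟨C, hC, hB, hCF⟩ := exists_coloring_of_cover F hind hsize hcov
  calc chiR G r ≤ #C := Nat.sInf_le ⟨C, hC, hB, rfl⟩
    _ ≤ #F := hCF

theorem exists_isOptimalRBounded (hr : 1 ≤ r) : ∃ C, IsOptimalRBounded G r C := by
  obtain ⟨C₀, hC₀, hB₀, -⟩ := exists_coloring_of_cover (G := G) (r := r) (univ.image singleton)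
    (by simp [Set.pairwise_singleton]) (by simp [hr]) (fun v => ⟨{v}, by simp⟩)
  have hne : {n | ∃ C : Finset (Finset V), IsColoring G C ∧ RBounded r C ∧ #C = n}.Nonempty :=
    ⟨_, C₀, hC₀, hB₀, rfl⟩
  obtain ⟨C, hC, hB, hcard⟩ := Nat.sInf_mem hne
  exact ⟨C, hC, hB, hcard⟩

theorem exists_isOptimalRBounded_card_filter_eq_stinginessR (hr : 1 ≤ r) :
    ∃ C, IsOptimalRBounded G r C ∧ #(C.filter fun I => #I = 1) = stinginessR G r := by
  obtain ⟨C, hC⟩ := exists_isOptimalRBounded (G := G) hr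
  have hne : {n | ∃ C : Finset (Finset V), IsOptimalRBounded G r C ∧
      #(C.filter fun I => #I = 1) = n}.Nonempty := ⟨_, C, hC, rfl⟩
  exact Nat.sSup_mem hne (bddAbove_card_filter_of_isOptimalRBounded _)

def singletonVertices (C : Finset (Finset V)) : Finset V :=
  univ.filter fun x => {x} ∈ C

theorem mem_singletonVertices {x : V} : x ∈ singletonVertices C ↔ {x} ∈ C := by
  simp [singletonVertices]

theorem card_singletonVertices : #(singletonVertices C) = #(C.filter fun I => #I = 1) := by
  rw [← card_image_of_injective _ singleton_injective]
  congr 1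
  ext I
  simp only [mem_image, mem_singletonVertices, mem_filter, card_eq_one]
  constructor
  · rintro ⟨x, hx, rfl⟩
    exact ⟨hx, x, rfl⟩
  · rintro ⟨hI, x, rfl⟩
    exact ⟨x, hI, rfl⟩

/-- The classes, with at least two vertices, of the `C`-lonely edges `(x, w)` leaving `x`. -/
def lonelyClasses (G : SimpleGraph V) [DecidableRel G.Adj] (C : Finset (Finset V)) (x : V) :
    Finset (Finset V) :=
  C.filter fun J => J.Nontrivial ∧ #(J.filter (G.Adj x)) = 1

theorem mem_lonelyClasses [DecidableRel G.Adj] {x : V} {J : Finset V} :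
    J ∈ lonelyClasses G C x ↔ J ∈ C ∧ J.Nontrivial ∧ ∃ w, J.filter (G.Adj x) = {w} := by
  simp [lonelyClasses, card_eq_one]

def lonelyNeighbours (G : SimpleGraph V) [DecidableRel G.Adj] (C L : Finset (Finset V)) :
    Finset V :=
  L.biUnion fun J => J.filter fun w => ∃ x ∈ singletonVertices C, J.filter (G.Adj x) = {w}

theorem mem_lonelyNeighbours [DecidableRel G.Adj] {L : Finset (Finset V)} {w : V} :
    w ∈ lonelyNeighbours G C L ↔
      ∃ J ∈ L, w ∈ J ∧ ∃ x ∈ singletonVertices C, J.filter (G.Adj x) = {w} := by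
  simp [lonelyNeighbours]

theorem IsColoring.card_le_card_lonelyNeighbours [DecidableRel G.Adj] (hC : IsColoring G C)
    {L : Finset (Finset V)} (hL : ∀ J ∈ L, ∃ x ∈ singletonVertices C, J ∈ lonelyClasses G C x) :
    #L ≤ #(lonelyNeighbours G C L) := by
  refine card_le_card_biUnion (fun J hJ J' hJ' hJJ' => ?_) fun J hJ => ?_
  · obtain ⟨_, -, hJC⟩ := hL J hJ
    obtain ⟨_, -, hJC'⟩ := hL J' hJ'
    exact disjoint_filter_filter (hC.disjoint_of_ne (mem_lonelyClasses.1 hJC).1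
      (mem_lonelyClasses.1 hJC').1 hJJ')
  · obtain ⟨x, hx, hJx⟩ := hL J hJ
    obtain ⟨-, -, w, hw⟩ := mem_lonelyClasses.1 hJx
    exact ⟨w, mem_filter.2 ⟨(mem_filter.1 (hw ▸ mem_singleton_self w)).1, x, hx, hw⟩⟩

theorem IsColoring.disjoint_singletonVertices_lonelyNeighbours [DecidableRel G.Adj]
    (hC : IsColoring G C) {L : Finset (Finset V)} (hLC : L ⊆ C) (hL1 : ∀ J ∈ L, J.Nontrivial) :
    Disjoint (singletonVertices C) (lonelyNeighbours G C L) := by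
  refine disjoint_right.2 fun w hw hwK => ?_
  obtain ⟨J, hJ, hwJ, -⟩ := mem_lonelyNeighbours.1 hw
  exact hC.notMem_of_singleton_mem (mem_singletonVertices.1 hwK) (hLC hJ) (hL1 J hJ) hwJ

namespace IsOptimalRBounded

variable (hopt : IsOptimalRBounded G r C)
include hopt

theorem card_le_card_of_cover {D E : Finset (Finset V)} (hD : D ⊆ C)
    (hind : ∀ e ∈ E, G.IsIndepSet (e : Set V)) (hsize : ∀ e ∈ E, #e ≤ r)
    (hcov : D.sup id ⊆ E.sup id) : #D ≤ #E := by
  have hchi : chiR G r ≤ #(C \ D ∪ E) := by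
    refine chiR_le_card_of_cover _ ?_ ?_ fun v => ?_
    · simp only [mem_union, mem_sdiff]
      rintro e (⟨he, -⟩ | he)
      exacts [hopt.1.isIndepSet he, hind e he]
    · simp only [mem_union, mem_sdiff]
      rintro e (⟨he, -⟩ | he)
      exacts [hopt.2.1 e he, hsize e he]
    · obtain ⟨I, ⟨hI, hvI⟩, -⟩ := hopt.1.2.1 v
      by_cases hID : I ∈ D
      · obtain ⟨e, he, hve⟩ := mem_sup.1 (hcov (mem_sup.2 ⟨I, hID, hvI⟩))
        exact ⟨e, mem_union_right _ he, hve⟩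
      · exact ⟨I, mem_union_left _ (mem_sdiff.2 ⟨hI, hID⟩), hvI⟩
  have hunion := card_union_le (C \ D) E
  rw [card_sdiff_of_subset hD] at hunion
  have := card_le_card hD
  have := hopt.2.2
  omega

theorem adj_of_singleton_mem (hr : 2 ≤ r) {a b : V} (ha : {a} ∈ C) (hb : {b} ∈ C)
    (hab : a ≠ b) : G.Adj a b := by
  by_contra hadj
  have := hopt.card_le_card_of_cover (D := {{a}, {b}}) (E := {{a, b}})
    (by simp [insert_subset_iff, ha, hb]) (by simpa using isIndepSet_pair_of_not_adj hadj)
    (by simpa [card_pair hab] using hr) (by intro v; simp [sup_eq_union])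
  rw [card_pair (by simpa using hab), card_singleton] at this
  omega

theorem exists_adj_of_card_lt {x : V} {J : Finset V} (hx : {x} ∈ C) (hJ : J ∈ C)
    (hJx : J ≠ {x}) (hJr : #J < r) : ∃ y ∈ J, G.Adj x y := by
  by_contra! hno
  have := hopt.card_le_card_of_cover (D := {{x}, J}) (E := {insert x J})
    (by simp [insert_subset_iff, hx, hJ])
    (by simpa using isIndepSet_insert_of_forall_not_adj (hopt.1.isIndepSet hJ) hno)
    (by simpa using (card_insert_le x J).trans hJr) (by intro v; simp [sup_eq_union])
  rw [card_pair hJx.symm, card_singleton] at this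
  omega

theorem lonely_adj_of_singleton_mem [DecidableRel G.Adj] (hr : 2 ≤ r) {x y w : V}
    {J : Finset V} (hx : {x} ∈ C) (hy : {y} ∈ C) (hJ : J ∈ C) (hJ1 : J.Nontrivial)
    (hw : J.filter (G.Adj x) = {w}) : G.Adj w y := by
  have hwJ : w ∈ J ∧ G.Adj x w := mem_filter.1 (hw ▸ mem_singleton_self w)
  rcases eq_or_ne x y with rfl | hxy
  · exact hwJ.2.symm
  by_contra hwy
  have hD : #({{x}, {y}, J} : Finset (Finset V)) = 3 :=
    card_eq_three.2 ⟨_, _, _, by simpa using hxy, hJ1.ne_singleton.symm,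
      hJ1.ne_singleton.symm, rfl⟩
  have := hopt.card_le_card_of_cover (D := {{x}, {y}, J}) (E := {insert x (J.erase w), {w, y}})
    (by simp [insert_subset_iff, hx, hy, hJ])
    (by simpa only [forall_mem_insert, mem_singleton, forall_eq] using
      ⟨isIndepSet_insert_erase_of_filter_adj_eq (hopt.1.isIndepSet hJ) hw,
        isIndepSet_pair_of_not_adj hwy⟩)
    (by simpa only [forall_mem_insert, mem_singleton, forall_eq] using
      ⟨(card_insert_erase_le hwJ.1).trans (hopt.2.1 J hJ), card_le_two.trans hr⟩)
    (by
      intro v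
      simp only [sup_insert, sup_singleton, id, sup_eq_union, mem_union, mem_insert,
        mem_singleton, mem_erase]
      by_cases v = w <;> tauto)
  have := card_le_two (a := insert x (J.erase w)) (b := {w, y})
  omega

theorem lonely_adj_lonely [DecidableRel G.Adj] (hr : 2 ≤ r) {x x' w w' : V} {J J' : Finset V}
    (hx : {x} ∈ C) (hx' : {x'} ∈ C) (hxx' : x ≠ x') (hJ : J ∈ C) (hJ' : J' ∈ C) (hJJ' : J ≠ J')
    (hJ1 : J.Nontrivial) (hJ1' : J'.Nontrivial)
    (hw : J.filter (G.Adj x) = {w}) (hw' : J'.filter (G.Adj x') = {w'}) : G.Adj w w' := by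
  have hwJ : w ∈ J := (mem_filter.1 (hw ▸ mem_singleton_self w)).1
  have hw'J' : w' ∈ J' := (mem_filter.1 (hw' ▸ mem_singleton_self w')).1
  by_contra hww'
  have hD : #({{x}, {x'}, J, J'} : Finset (Finset V)) = 4 := by
    rw [card_insert_of_notMem, card_insert_of_notMem, card_pair hJJ']
    · simp [hJ1.ne_singleton.symm, hJ1'.ne_singleton.symm]
    · simp [hxx', hJ1.ne_singleton.symm, hJ1'.ne_singleton.symm]
  have := hopt.card_le_card_of_cover (D := {{x}, {x'}, J, J'})
    (E := {insert x (J.erase w), insert x' (J'.erase w'), {w, w'}})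
    (by simp [insert_subset_iff, hx, hx', hJ, hJ'])
    (by simpa only [forall_mem_insert, mem_singleton, forall_eq] using
      ⟨isIndepSet_insert_erase_of_filter_adj_eq (hopt.1.isIndepSet hJ) hw,
        isIndepSet_insert_erase_of_filter_adj_eq (hopt.1.isIndepSet hJ') hw',
        isIndepSet_pair_of_not_adj hww'⟩)
    (by simpa only [forall_mem_insert, mem_singleton, forall_eq] using
      ⟨(card_insert_erase_le hwJ).trans (hopt.2.1 J hJ),
        (card_insert_erase_le hw'J').trans (hopt.2.1 J' hJ'), card_le_two.trans hr⟩)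
    (by
      intro v
      simp only [sup_insert, sup_singleton, id, sup_eq_union, mem_union, mem_insert,
        mem_singleton, mem_erase]
      by_cases v = w <;> by_cases v = w' <;> tauto)
  have := card_le_three (a := insert x (J.erase w)) (b := insert x' (J'.erase w')) (c := {w, w'})
  omega

theorem lonely_unique [DecidableRel G.Adj] (hr : 2 ≤ r) {x y w w' : V} {J : Finset V}
    (hx : {x} ∈ C) (hy : {y} ∈ C) (hJ : J ∈ C) (hJ1 : J.Nontrivial)
    (hw : J.filter (G.Adj x) = {w}) (hw' : J.filter (G.Adj y) = {w'}) : w' = w := by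
  have hw'J : w' ∈ J := (mem_filter.1 (hw' ▸ mem_singleton_self w')).1
  have hxw' : G.Adj x w' := (hopt.lonely_adj_of_singleton_mem hr hy hx hJ hJ1 hw').symm
  exact mem_singleton.1 (hw ▸ mem_filter.2 ⟨hw'J, hxw'⟩)

theorem isClique_singletonVertices_union_lonelyNeighbours [DecidableRel G.Adj] (hr : 2 ≤ r)
    {L : Finset (Finset V)} (hLC : L ⊆ C) (hL1 : ∀ J ∈ L, J.Nontrivial)
    (hsep : ∀ J ∈ L, ∀ J' ∈ L, J ≠ J' → ∃ x ∈ singletonVertices C, ∃ x' ∈ singletonVertices C,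
      x ≠ x' ∧ J ∈ lonelyClasses G C x ∧ J' ∈ lonelyClasses G C x') :
    G.IsClique ((singletonVertices C ∪ lonelyNeighbours G C L : Finset V) : Set V) := by
  rw [coe_union, SimpleGraph.IsClique, Set.pairwise_union]
  refine ⟨fun x hx y hy hxy => ?_, fun w hw w' hw' hww' => ?_, fun y hy w hw _ => ?_⟩
  · exact hopt.adj_of_singleton_mem hr (mem_singletonVertices.1 hx)
      (mem_singletonVertices.1 hy) hxy
  · obtain ⟨J, hJ, -, x, hx, hxw⟩ := mem_lonelyNeighbours.1 hw
    obtain ⟨J', hJ', -, x', hx', hxw'⟩ := mem_lonelyNeighbours.1 hw'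
    rcases eq_or_ne J J' with rfl | hJJ'
    · exact absurd (hopt.lonely_unique hr (mem_singletonVertices.1 hx)
        (mem_singletonVertices.1 hx') (hLC hJ) (hL1 J hJ) hxw hxw') hww'.symm
    obtain ⟨y, hy, y', hy', hyy', hJy, hJy'⟩ := hsep J hJ J' hJ' hJJ'
    obtain ⟨-, -, u, hu⟩ := mem_lonelyClasses.1 hJy
    obtain ⟨-, -, u', hu'⟩ := mem_lonelyClasses.1 hJy'
    rw [hopt.lonely_unique hr (mem_singletonVertices.1 hy) (mem_singletonVertices.1 hx)
      (hLC hJ) (hL1 J hJ) hu hxw, hopt.lonely_unique hr (mem_singletonVertices.1 hy')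
      (mem_singletonVertices.1 hx') (hLC hJ') (hL1 J' hJ') hu' hxw']
    exact hopt.lonely_adj_lonely hr (mem_singletonVertices.1 hy) (mem_singletonVertices.1 hy')
      hyy' (hLC hJ) (hLC hJ') hJJ' (hL1 J hJ) (hL1 J' hJ') hu hu'
  · obtain ⟨J, hJ, -, x, hx, hxw⟩ := mem_lonelyNeighbours.1 hw
    have := hopt.lonely_adj_of_singleton_mem hr (mem_singletonVertices.1 hx)
      (mem_singletonVertices.1 hy) (hLC hJ) (hL1 J hJ) hxw
    exact ⟨this.symm, this⟩

theorem card_singletonVertices_add_card_le_cliqueNum [DecidableRel G.Adj] (hr : 2 ≤ r)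
    {L : Finset (Finset V)}
    (hL : ∀ J ∈ L, ∃ x ∈ singletonVertices C, J ∈ lonelyClasses G C x)
    (hsep : ∀ J ∈ L, ∀ J' ∈ L, J ≠ J' → ∃ x ∈ singletonVertices C, ∃ x' ∈ singletonVertices C,
      x ≠ x' ∧ J ∈ lonelyClasses G C x ∧ J' ∈ lonelyClasses G C x') :
    #(singletonVertices C) + #L ≤ G.cliqueNum := by
  have hL' : ∀ J ∈ L, J ∈ C ∧ J.Nontrivial := fun J hJ => by
    obtain ⟨_, -, hJx⟩ := hL J hJ
    exact ⟨(mem_lonelyClasses.1 hJx).1, (mem_lonelyClasses.1 hJx).2.1⟩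
  have hLC : L ⊆ C := fun J hJ => (hL' J hJ).1
  have hL1 : ∀ J ∈ L, J.Nontrivial := fun J hJ => (hL' J hJ).2
  calc #(singletonVertices C) + #L
      ≤ #(singletonVertices C) + #(lonelyNeighbours G C L) :=
        Nat.add_le_add_left (hopt.1.card_le_card_lonelyNeighbours hL) _
    _ = #(singletonVertices C ∪ lonelyNeighbours G C L) :=
        (card_union_of_disjoint (hopt.1.disjoint_singletonVertices_lonelyNeighbours hLC hL1)).symm
    _ ≤ G.cliqueNum :=
        (hopt.isClique_singletonVertices_union_lonelyNeighbours hr hLC hL1 hsep).card_le_cliqueNum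

theorem exists_card_add_card_lonelyClasses_le [DecidableRel G.Adj] (hr : 2 ≤ r)
    (hbig : G.cliqueNum < 2 * #(singletonVertices C)) :
    ∃ x ∈ singletonVertices C, #(singletonVertices C) + #(lonelyClasses G C x) ≤ G.cliqueNum := by
  set K := singletonVertices C
  by_contra! hcon
  set shared := C.filter fun J => ∃ x ∈ K, ∃ y ∈ K, x ≠ y ∧
    J ∈ lonelyClasses G C x ∧ J ∈ lonelyClasses G C y
  by_cases hshared : G.cliqueNum < #K + #shared
  · refine hshared.not_ge (hopt.card_singletonVertices_add_card_le_cliqueNum hr ?_ ?_)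
    · intro J hJ
      obtain ⟨-, x, hx, -, -, -, hJx, -⟩ := mem_filter.1 hJ
      exact ⟨x, hx, hJx⟩
    · intro J hJ J' hJ' _
      obtain ⟨-, x, hx, y, hy, hxy, hJx, hJy⟩ := mem_filter.1 hJ
      obtain ⟨-, x', hx', -, -, -, hJx', -⟩ := mem_filter.1 hJ'
      rcases eq_or_ne x x' with rfl | hxx'
      · exact ⟨y, hy, x, hx, hxy.symm, hJy, hJx'⟩
      · exact ⟨x, hx, x', hx', hxx', hJx, hJx'⟩
  · -- so many lonely classes are left that every pivot has one of its own
    have hprivate : ∀ x ∈ K, ∃ J ∈ lonelyClasses G C x, J ∉ shared := fun x hx => by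
      by_contra! hsub
      have := card_le_card (show lonelyClasses G C x ⊆ shared from hsub)
      have := hcon x hx
      omega
    choose! P hPL hPs using hprivate
    have hPinj : Set.InjOn P K := fun x hx y hy hxy => by
      by_contra hne
      exact hPs x hx (mem_filter.2 ⟨(mem_lonelyClasses.1 (hPL x hx)).1, x, hx, y, hy, hne,
        hPL x hx, hxy ▸ hPL y hy⟩)
    have : #K + #(K.image P) ≤ G.cliqueNum :=
      hopt.card_singletonVertices_add_card_le_cliqueNum hr
      (by simpa only [forall_mem_image] using fun x hx => ⟨x, hx, hPL x hx⟩)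
      (by
        simp only [forall_mem_image]
        exact fun x hx y hy hne => ⟨x, hx, y, hy, fun h => hne (h ▸ rfl), hPL x hx, hPL y hy⟩)
    rw [card_image_of_injOn hPinj] at this
    omega

theorem two_mul_card_le_degree_add [DecidableRel G.Adj] (hr : 2 ≤ r) {x : V} (hx : {x} ∈ C) :
    2 * #C ≤ G.degree x + 1 + #(lonelyClasses G C x) + #(singletonVertices C) +
      2 * #(C.filter fun I => #I = r) := by
  have hclass : ∀ I ∈ C, 2 ≤ #(I.filter (G.Adj x)) + (if I = {x} then 1 else 0) +
      (if I.Nontrivial ∧ #(I.filter (G.Adj x)) = 1 then 1 else 0) +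
      (if #I = 1 then 1 else 0) + 2 * (if #I = r then 1 else 0) := by
    intro I hI
    have hI0 : 0 < #I := card_pos.2 (hopt.1.1 I hI)
    have hIr := hopt.2.1 I hI
    rcases (show #I = 1 ∨ (1 < #I ∧ #I < r) ∨ #I = r by omega) with h1 | ⟨h1, hlt⟩ | hIr
    · obtain ⟨y, rfl⟩ := card_eq_one.1 h1
      rcases eq_or_ne y x with rfl | hyx
      · rw [if_pos rfl, if_pos h1]
        omega
      · have := hopt.adj_of_singleton_mem hr hx hI hyx.symm
        simp [filter_singleton, this, hyx]
    · have hI1 := one_lt_card_iff_nontrivial.1 h1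
      obtain ⟨y, hyI, hxy⟩ := hopt.exists_adj_of_card_lt hx hI hI1.ne_singleton hlt
      have : 0 < #(I.filter (G.Adj x)) := card_pos.2 ⟨y, mem_filter.2 ⟨hyI, hxy⟩⟩
      rw [if_neg hI1.ne_singleton, if_neg h1.ne', if_neg hlt.ne]
      simp only [hI1, true_and]
      split_ifs <;> omega
    · rw [if_pos hIr]
      omega
  calc 2 * #C = ∑ I ∈ C, 2 := by rw [sum_const, smul_eq_mul, mul_comm]
    _ ≤ _ := sum_le_sum hclass
    _ = _ := by
      simp only [sum_add_distrib, ← mul_sum, sum_ite_eq', if_pos hx, ← card_filter,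
        ← hopt.1.degree_eq_sum_card_filter_adj, card_singletonVertices]
      rfl

end IsOptimalRBounded

theorem statement_17 (G : SimpleGraph V) [DecidableRel G.Adj] (r : ℕ) (hr : 2 ≤ r)
    (h : (G.cliqueNum : ℝ) / 2 < (stinginessR G r : ℝ)) :
    (chiR G r : ℝ) - Mr G r ≤ ((G.cliqueNum : ℝ) + G.maxDegree + 1) / 2 := by
  obtain ⟨C, hopt, hι⟩ :=
    exists_isOptimalRBounded_card_filter_eq_stinginessR (G := G) (by omega : 1 ≤ r)
  have hbig : G.cliqueNum < 2 * #(singletonVertices C) := by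
    rw [card_singletonVertices, hι]
    exact_mod_cast (by linarith : (G.cliqueNum : ℝ) < 2 * stinginessR G r)
  obtain ⟨x, hx, hxω⟩ := hopt.exists_card_add_card_lonelyClasses_le hr hbig
  have hcount := hopt.two_mul_card_le_degree_add hr (mem_singletonVertices.1 hx)
  have hΔ := G.degree_le_maxDegree x
  have hM := hopt.card_filter_card_eq_le_Mr_s17
  have hχ : 2 * chiR G r ≤ G.cliqueNum + G.maxDegree + 1 + 2 * Mr G r := by
    rw [← hopt.2.2]
    omega
  have : (2 * chiR G r : ℝ) ≤ G.cliqueNum + G.maxDegree + 1 + 2 * Mr G r := by exact_mod_cast hχ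
  linarith
end

section
/- For every finite simple graph G, ι_2(G) ≤ (ω(G) + Δ(G) + 1)/2. -/
open Finset

variable {V : Type*} [Fintype V] [DecidableEq V]

/-!
Two singleton classes of an optimal `r`-bounded coloring (`r ≥ 2`) are adjacent: otherwise
merging them into one class of order two would save a color. Hence the singleton classes span
a clique, so `ι_2(G) ≤ ω(G)`, and `ω(G) ≤ Δ(G) + 1` averages this into the bound.
-/

open Finset

lemma Finset.card_filter_card_eq_one (C : Finset (Finset V)) :
    (C.filter fun I => I.card = 1).card = (univ.filter fun a => {a} ∈ C).card := by
  have h : (C.filter fun I => I.card = 1) =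
      (univ.filter fun a => {a} ∈ C).map ⟨singleton, singleton_injective⟩ := by
    ext I
    simp only [mem_filter, card_eq_one, mem_map, mem_univ, true_and, Function.Embedding.coeFn_mk]
    aesop
  rw [h, card_map]

namespace IsColoring

variable {α : Type*} [DecidableEq α] {G : SimpleGraph α} {C : Finset (Finset α)} {I J : Finset α}

lemma merge (hC : IsColoring G C) (hI : I ∈ C) (hJ : J ∈ C)
    (hIJ : ∀ v ∈ I, ∀ w ∈ J, ¬ G.Adj v w) :
    IsColoring G (insert (I ∪ J) ((C.erase I).erase J)) := by
  have hrest : ∀ K ∈ (C.erase I).erase J, K ∈ C ∧ K ≠ I ∧ K ≠ J := by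
    intro K hK
    obtain ⟨hKJ, hKI, hKC⟩ := by simpa only [mem_erase] using hK
    exact ⟨hKC, hKI, hKJ⟩
  refine ⟨fun K hK => ?_, fun v => ?_, fun K hK v hv w hw => ?_⟩
  · rcases mem_insert.mp hK with rfl | hK
    · exact (hC.1 I hI).mono subset_union_left
    · exact hC.1 K (hrest K hK).1
  · by_cases hv : v ∈ I ∪ J
    · refine ⟨I ∪ J, ⟨mem_insert_self _ _, hv⟩, fun K ⟨hK, hvK⟩ => ?_⟩
      rcases mem_insert.mp hK with rfl | hK
      · rfl
      obtain ⟨hKC, hKI, hKJ⟩ := hrest K hK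
      rcases mem_union.mp hv with hvI | hvJ
      · exact absurd ((hC.2.1 v).unique ⟨hKC, hvK⟩ ⟨hI, hvI⟩) hKI
      · exact absurd ((hC.2.1 v).unique ⟨hKC, hvK⟩ ⟨hJ, hvJ⟩) hKJ
    · obtain ⟨K, ⟨hKC, hvK⟩, hK⟩ := hC.2.1 v
      have hKI : K ≠ I := by rintro rfl; exact hv (mem_union_left _ hvK)
      have hKJ : K ≠ J := by rintro rfl; exact hv (mem_union_right _ hvK)
      refine ⟨K, ⟨mem_insert_of_mem (mem_erase.2 ⟨hKJ, mem_erase.2 ⟨hKI, hKC⟩⟩), hvK⟩,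
        fun K' ⟨hK', hvK'⟩ => ?_⟩
      rcases mem_insert.mp hK' with rfl | hK'
      · exact absurd hvK' hv
      · exact hK K' ⟨(hrest K' hK').1, hvK'⟩
  · rcases mem_insert.mp hK with rfl | hK
    · rcases mem_union.mp hv with hv | hv <;> rcases mem_union.mp hw with hw | hw
      · exact hC.2.2 I hI v hv w hw
      · exact hIJ v hv w hw
      · exact fun h => hIJ w hw v hv h.symm
      · exact hC.2.2 J hJ v hv w hw
    · exact hC.2.2 K (hrest K hK).1 v hv w hw

lemma card_merge_add_one (hC : IsColoring G C) (hI : I ∈ C) (hJ : J ∈ C) (hne : I ≠ J) :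
    (insert (I ∪ J) ((C.erase I).erase J)).card + 1 = C.card := by
  have hJ' : J ∈ C.erase I := mem_erase.2 ⟨hne.symm, hJ⟩
  have hunion : I ∪ J ∉ (C.erase I).erase J := by
    intro h
    obtain ⟨-, hne', hmem⟩ := by simpa only [mem_erase] using h
    obtain ⟨v, hv⟩ := hC.1 I hI
    exact hne' ((hC.2.1 v).unique ⟨hmem, mem_union_left _ hv⟩ ⟨hI, hv⟩)
  rw [card_insert_of_notMem hunion, card_erase_add_one hJ', card_erase_add_one hI]

end IsColoring

section Singletons

variable {G : SimpleGraph V} {C : Finset (Finset V)} {r : ℕ}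

lemma IsOptimalRBounded.isClique_singletons (hr : 2 ≤ r) (hC : IsOptimalRBounded G r C) :
    G.IsClique (univ.filter fun a => {a} ∈ C : Finset V) := by
  obtain ⟨hcol, hbdd, hcard⟩ := hC
  intro a ha b hb hab
  replace ha : {a} ∈ C := by simpa using ha
  replace hb : {b} ∈ C := by simpa using hb
  by_contra hadj
  have hne : ({a} : Finset V) ≠ {b} := by simpa using hab
  have hmerge := hcol.merge ha hb (by simpa using hadj)
  have hbdd' : RBounded r (insert ({a} ∪ {b}) ((C.erase {a}).erase {b})) := by
    intro K hK
    rcases mem_insert.mp hK with rfl | hK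
    · exact (card_union_le _ _).trans (by simpa using hr)
    · exact hbdd K (mem_of_mem_erase (mem_of_mem_erase hK))
  have hchi : chiR G r ≤ _ := Nat.sInf_le ⟨_, hmerge, hbdd', rfl⟩
  have := hcol.card_merge_add_one ha hb hne
  omega

lemma stinginessR_le_cliqueNum (hr : 2 ≤ r) : stinginessR G r ≤ G.cliqueNum := by
  refine csSup_le' ?_
  rintro _ ⟨C, hC, rfl⟩
  rw [card_filter_card_eq_one]
  exact (hC.isClique_singletons hr).card_le_cliqueNum

end Singletons

lemma SimpleGraph.cliqueNum_le_maxDegree_add_one (G : SimpleGraph V) [DecidableRel G.Adj] :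
    G.cliqueNum ≤ G.maxDegree + 1 := by
  obtain ⟨s, hs⟩ := G.exists_isNClique_cliqueNum
  rcases s.eq_empty_or_nonempty with rfl | ⟨v, hv⟩
  · simp [← hs.card_eq]
  have hsub : s ⊆ insert v (G.neighborFinset v) := by
    intro w hw
    rcases eq_or_ne w v with rfl | hwv
    · exact mem_insert_self _ _
    · exact mem_insert_of_mem ((G.mem_neighborFinset _ _).2 (hs.isClique hv hw hwv.symm))
  calc G.cliqueNum = s.card := hs.card_eq.symm
    _ ≤ (insert v (G.neighborFinset v)).card := card_le_card hsub
    _ ≤ G.degree v + 1 := card_insert_le _ _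
    _ ≤ G.maxDegree + 1 := Nat.add_le_add_right (G.degree_le_maxDegree v) 1

theorem statement_18 (G : SimpleGraph V) [DecidableRel G.Adj] :
    (stinginessR G 2 : ℝ) ≤ ((G.cliqueNum : ℝ) + G.maxDegree + 1) / 2 := by
  have hι : stinginessR G 2 ≤ G.cliqueNum := stinginessR_le_cliqueNum le_rfl
  have hω := G.cliqueNum_le_maxDegree_add_one
  rw [le_div_iff₀ two_pos]
  exact_mod_cast (by omega : stinginessR G 2 * 2 ≤ G.cliqueNum + G.maxDegree + 1)
end

section
/- For every finite simple graph G, the matching number satisfies ν(G) ≥ (|G| − α(G) + δ(G))/4. -/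
open Finset

variable {V : Type*} [Fintype V] [DecidableEq V]

/-! A maximum matching covers at most `2ν(G)` vertices. The uncovered vertices are pairwise
non-adjacent, since an edge between two of them would enlarge the matching; hence
`|G| ≤ α(G) + 2ν(G)`. For the same reason every neighbour of an uncovered vertex is covered, so
`δ(G) ≤ 2ν(G)` (if no vertex is uncovered, `δ(G) < |G| ≤ 2ν(G)`). Adding the two inequalities
gives `|G| - α(G) + δ(G) ≤ 4ν(G)`. -/

theorem Sym2.ncard_coe_le_two {α : Type*} (e : Sym2 α) : (e : Set α).ncard ≤ 2 := by
  induction e with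
  | h a b => exact Sym2.coe_mk ▸ (Set.ncard_insert_le _ _).trans (by simp)

namespace SimpleGraph.Subgraph

variable {V : Type*} {G : SimpleGraph V} {M : G.Subgraph} {v w : V}

theorem IsMatching.ncard_verts_le [Finite V] (hM : M.IsMatching) :
    M.verts.ncard ≤ 2 * M.edgeSet.ncard := by
  have hE := M.edgeSet.toFinite
  rw [hM.verts_eq_biUnion_edgeSet, ← hE.coe_toFinset, Set.ncard_coe_finset]
  calc (⋃ e ∈ (hE.toFinset : Set (Sym2 V)), (e : Set V)).ncard
      ≤ ∑ e ∈ hE.toFinset, (e : Set V).ncard := by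
        simpa only [Finset.mem_coe] using hE.toFinset.set_ncard_biUnion_le (fun e => (e : Set V))
    _ ≤ ∑ _e ∈ hE.toFinset, 2 := sum_le_sum fun e _ => e.ncard_coe_le_two
    _ = 2 * #hE.toFinset := by rw [sum_const, smul_eq_mul, mul_comm]

theorem IsMatching.sup_subgraphOfAdj (hM : M.IsMatching) (hv : v ∉ M.verts) (hw : w ∉ M.verts)
    (hvw : G.Adj v w) : (M ⊔ G.subgraphOfAdj hvw).IsMatching := by
  refine hM.sup (.subgraphOfAdj hvw) ?_
  rw [hM.support_eq_verts, support_subgraphOfAdj, Set.disjoint_insert_right,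
    Set.disjoint_singleton_right]
  exact ⟨hv, hw⟩

theorem ncard_edgeSet_sup_subgraphOfAdj [Finite V] (hv : v ∉ M.verts) (hvw : G.Adj v w) :
    (M ⊔ G.subgraphOfAdj hvw).edgeSet.ncard = M.edgeSet.ncard + 1 := by
  rw [edgeSet_sup, edgeSet_subgraphOfAdj, Set.union_singleton]
  exact Set.ncard_insert_of_notMem fun he => hv (M.edge_vert he)

theorem _root_.SimpleGraph.bddAbove_ncard_edgeSet_isMatching [Finite V] (G : SimpleGraph V) :
    BddAbove {n | ∃ M : G.Subgraph, M.IsMatching ∧ M.edgeSet.ncard = n} :=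
  ⟨Nat.card (Sym2 V), by rintro _ ⟨M, -, rfl⟩; exact Set.ncard_le_card _⟩

theorem IsMatching.ncard_edgeSet_le_matchingNumber [Finite V] (hM : M.IsMatching) :
    M.edgeSet.ncard ≤ matchingNumber G :=
  le_csSup G.bddAbove_ncard_edgeSet_isMatching ⟨M, hM, rfl⟩

def IsMaximumMatching (M : G.Subgraph) : Prop :=
  M.IsMatching ∧ M.edgeSet.ncard = matchingNumber G

theorem _root_.SimpleGraph.exists_isMaximumMatching [Finite V] (G : SimpleGraph V) :
    ∃ M : G.Subgraph, M.IsMaximumMatching := by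
  refine Nat.sSup_mem ?_ G.bddAbove_ncard_edgeSet_isMatching
  exact ⟨0, ⊥, by simp [IsMatching], by simp⟩

theorem IsMaximumMatching.not_adj [Finite V] (hM : M.IsMaximumMatching) (hv : v ∉ M.verts)
    (hw : w ∉ M.verts) : ¬ G.Adj v w := fun hvw => by
  have := (hM.1.sup_subgraphOfAdj hv hw hvw).ncard_edgeSet_le_matchingNumber
  rw [ncard_edgeSet_sup_subgraphOfAdj hv hvw, hM.2] at this
  omega

theorem IsMaximumMatching.ncard_verts_le [Finite V] (hM : M.IsMaximumMatching) :
    M.verts.ncard ≤ 2 * matchingNumber G :=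
  hM.2 ▸ hM.1.ncard_verts_le

theorem IsMaximumMatching.isIndepSet_compl_verts [Finite V] (hM : M.IsMaximumMatching) :
    G.IsIndepSet M.vertsᶜ :=
  fun _ hv _ hw _ => hM.not_adj hv hw

theorem IsMaximumMatching.neighborSet_subset_verts [Finite V] (hM : M.IsMaximumMatching)
    (hv : v ∉ M.verts) : G.neighborSet v ⊆ M.verts :=
  fun _ hvw => by_contra fun hw => hM.not_adj hv hw hvw

end SimpleGraph.Subgraph

section

variable {V : Type*} [Fintype V] (G : SimpleGraph V)

theorem ncard_le_indepNum {G : SimpleGraph V} {s : Set V} (hs : G.IsIndepSet s) :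
    s.ncard ≤ indepNum G := by
  classical
  refine le_csSup ⟨Fintype.card V, ?_⟩
    ⟨s.toFinset, fun v hv w hw hvw => ?_, (Set.ncard_eq_toFinset_card' s).symm⟩
  · rintro _ ⟨t, -, rfl⟩
    exact card_le_univ t
  · rw [Set.mem_toFinset] at hv hw
    exact hs hv hw hvw.ne hvw

theorem card_le_indepNum_add_two_mul_matchingNumber :
    Fintype.card V ≤ indepNum G + 2 * matchingNumber G := by
  obtain ⟨M, hM⟩ := G.exists_isMaximumMatching
  have hsplit := Set.ncard_add_ncard_compl M.verts
  rw [Nat.card_eq_fintype_card] at hsplit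
  have := ncard_le_indepNum hM.isIndepSet_compl_verts
  have := hM.ncard_verts_le
  omega

theorem minDegree_le_two_mul_matchingNumber [DecidableRel G.Adj] :
    G.minDegree ≤ 2 * matchingNumber G := by
  obtain ⟨M, hM⟩ := G.exists_isMaximumMatching
  refine le_trans ?_ hM.ncard_verts_le
  by_cases hspan : M.verts = Set.univ
  · rcases isEmpty_or_nonempty V with _ | _
    · simp
    · rw [hspan, Set.ncard_univ, Nat.card_eq_fintype_card]
      exact G.minDegree_lt_card.le
  · obtain ⟨v, hv⟩ := (Set.ne_univ_iff_exists_notMem _).mp hspan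
    calc G.minDegree ≤ G.degree v := G.minDegree_le_degree v
      _ = (G.neighborSet v).ncard := (Set.ncard_eq_toFinset_card' _).symm
      _ ≤ M.verts.ncard := Set.ncard_le_ncard (hM.neighborSet_subset_verts hv)

end

theorem statement_19 (G : SimpleGraph V) [DecidableRel G.Adj] :
    ((Fintype.card V : ℝ) - indepNum G + G.minDegree) / 4
      ≤ (matchingNumber G : ℝ) := by
  have hcard : (Fintype.card V : ℝ) ≤ indepNum G + 2 * matchingNumber G := by
    exact_mod_cast card_le_indepNum_add_two_mul_matchingNumber G
  have hdeg : (G.minDegree : ℝ) ≤ 2 * matchingNumber G := by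
    exact_mod_cast minDegree_le_two_mul_matchingNumber G
  rw [div_le_iff₀ four_pos]
  linarith
end
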